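/- arXiv:1601.06471 — 2 statements merged into one kernel-verified Lean document; each statement's English description precedes it below -/
import Mathlib

section
/- Let K be a field, n ≥ 1, and A ∈ K^{n×n}. Then A = F_p for some p ∈ K^n if and only if the bilinear map (b, g) ↦ R(A, b) g is symmetric, i.e. [g, Ag, …, A^{n-1} g] b = [b, Ab, …, A^{n-1} b] g for all b, g ∈ K^n. -/
open Matrix

/-- The second companion matrix `F_p` of `p ∈ K^{n+1}`: columns `0,…,n-1` are
`e_1,…,e_n` and the last column is `p`. -/
def companion {K : Type*} [Field K] {n : ℕ} (p : Fin (n + 1) → K) :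
    Matrix (Fin (n + 1)) (Fin (n + 1)) K :=
  Matrix.of fun i j => if j = Fin.last n then p i else if (i : ℕ) = (j : ℕ) + 1 then 1 else 0

/-- The reachability (Krylov) matrix `R(A, g) = [g, Ag, …, A^{n-1} g]`. -/
def krylov {K : Type*} [Field K] {n : ℕ} (A : Matrix (Fin n) (Fin n) K) (g : Fin n → K) :
    Matrix (Fin n) (Fin n) K :=
  Matrix.of fun i j => (A ^ (j : ℕ)).mulVec g i

/-- `b(A) = Σ_{i=0}^{n-1} b_i A^i`. -/
def polyEval {K : Type*} [Field K] {n : ℕ} (b : Fin n → K) (A : Matrix (Fin n) (Fin n) K) :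
    Matrix (Fin n) (Fin n) K :=
  ∑ i : Fin n, b i • A ^ (i : ℕ)

/-!
Write `b(A) = ∑ bᵢ Aⁱ`. Then `R(A, g) b = b(A) g`, and any two polynomials in `A` commute.
If `A ^ k e₀ = e_k` for all `k`, then `b(A) e₀ = b`, so
`R(A, g) b = b(A) g(A) e₀ = g(A) b(A) e₀ = R(A, b) g`. Conversely, symmetry applied to `e_k` and
`e₀` gives `A ^ k e₀ = R(A, e₀) e_k = R(A, e_k) e₀ = e_k`. Finally, `A ^ k e₀ = e_k` for all `k`
says exactly that `A e_j = e_{j+1}` for `j < n`, i.e. that `A` is a companion matrix.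
-/

section Krylov

variable {K : Type*} [Field K] {n : ℕ} (A : Matrix (Fin n) (Fin n) K)

theorem krylov_mulVec (b g : Fin n → K) : krylov A g *ᵥ b = polyEval b A *ᵥ g := by
  simp only [polyEval, Matrix.sum_mulVec, Matrix.smul_mulVec]
  ext i
  simp [krylov, Matrix.mulVec, dotProduct, Finset.sum_apply, mul_comm]

theorem krylov_mulVec_single_one (g : Fin n → K) (k : Fin n) :
    krylov A g *ᵥ Pi.single k 1 = (A ^ (k : ℕ)) *ᵥ g := by
  ext i
  simp [krylov]

theorem commute_polyEval (b g : Fin n → K) : Commute (polyEval b A) (polyEval g A) :=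
  Commute.sum_left _ _ _ fun _ _ => Commute.sum_right _ _ _ fun _ _ =>
    (((Commute.refl A).pow_pow _ _).smul_left _).smul_right _

theorem polyEval_mulVec_of_pow_mulVec {v : Fin n → K}
    (hv : ∀ k : Fin n, (A ^ (k : ℕ)) *ᵥ v = Pi.single k 1) (b : Fin n → K) :
    polyEval b A *ᵥ v = b := by
  simp only [polyEval, Matrix.sum_mulVec, Matrix.smul_mulVec, hv, ← Pi.single_smul', smul_eq_mul,
    mul_one, Finset.univ_sum_single]

end Krylov

section Companion

variable {K : Type*} [Field K] {n : ℕ}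

theorem companion_mulVec_single_castSucc (p : Fin (n + 1) → K) (j : Fin n) :
    companion p *ᵥ Pi.single j.castSucc 1 = Pi.single j.succ 1 := by
  ext i
  simp [companion, Pi.single_apply, Fin.ext_iff, j.is_lt.ne]

theorem companion_mulVec_single_last (p : Fin (n + 1) → K) :
    companion p *ᵥ Pi.single (Fin.last n) 1 = p := by
  ext i
  simp [companion]

theorem exists_eq_companion_iff (A : Matrix (Fin (n + 1)) (Fin (n + 1)) K) :
    (∃ p, A = companion p) ↔ ∀ j : Fin n, A *ᵥ Pi.single j.castSucc 1 = Pi.single j.succ 1 := by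
  refine ⟨by rintro ⟨p, rfl⟩; exact companion_mulVec_single_castSucc p, fun hA => ?_⟩
  refine ⟨A *ᵥ Pi.single (Fin.last n) 1, Matrix.ext_of_mulVec_single fun j => ?_⟩
  cases j using Fin.lastCases with
  | last => rw [companion_mulVec_single_last]
  | cast j => rw [hA, companion_mulVec_single_castSucc]

theorem mulVec_single_castSucc_iff_pow_mulVec_single_zero
    (A : Matrix (Fin (n + 1)) (Fin (n + 1)) K) :
    (∀ j : Fin n, A *ᵥ Pi.single j.castSucc 1 = Pi.single j.succ 1) ↔
      ∀ k : Fin (n + 1), (A ^ (k : ℕ)) *ᵥ Pi.single 0 1 = Pi.single k 1 := by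
  constructor
  · intro hA k
    induction k using Fin.induction with
    | zero => rw [Fin.val_zero, pow_zero, Matrix.one_mulVec]
    | succ j ih => rw [Fin.val_succ, pow_succ', ← Matrix.mulVec_mulVec, ← Fin.val_castSucc, ih, hA]
  · intro hA j
    rw [← hA j.castSucc, Matrix.mulVec_mulVec, ← pow_succ', ← hA j.succ, Fin.val_castSucc,
      Fin.val_succ]

theorem krylov_mulVec_symm_iff (A : Matrix (Fin (n + 1)) (Fin (n + 1)) K) :
    (∀ b g : Fin (n + 1) → K, krylov A g *ᵥ b = krylov A b *ᵥ g) ↔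
      ∀ k : Fin (n + 1), (A ^ (k : ℕ)) *ᵥ Pi.single 0 1 = Pi.single k 1 := by
  constructor
  · intro hsymm k
    have h := hsymm (Pi.single k 1) (Pi.single 0 1)
    rwa [krylov_mulVec_single_one, krylov_mulVec_single_one, Fin.val_zero, pow_zero,
      Matrix.one_mulVec] at h
  · intro hA b g
    have hcyclic := polyEval_mulVec_of_pow_mulVec A hA
    calc krylov A g *ᵥ b = polyEval b A *ᵥ (polyEval g A *ᵥ Pi.single 0 1) := by
          rw [krylov_mulVec, hcyclic]
      _ = polyEval g A *ᵥ (polyEval b A *ᵥ Pi.single 0 1) := by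
          rw [Matrix.mulVec_mulVec, Matrix.mulVec_mulVec, (commute_polyEval A b g).eq]
      _ = krylov A b *ᵥ g := by rw [hcyclic, krylov_mulVec]

end Companion

/-- Theorem 2: `A = F_p` for some `p` iff the bilinear map `(b,g) ↦ R(A,b)g` is
symmetric, i.e. `[g, Ag, …, A^{n-1}g] b = [b, Ab, …, A^{n-1}b] g` for all `b, g`. -/
theorem companion_iff_krylov_symm {K : Type*} [Field K] {n : ℕ}
    (A : Matrix (Fin (n + 1)) (Fin (n + 1)) K) :
    (∃ p : Fin (n + 1) → K, A = companion p) ↔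
      ∀ b g : Fin (n + 1) → K, (krylov A g).mulVec b = (krylov A b).mulVec g := by
  rw [exists_eq_companion_iff, mulVec_single_castSucc_iff_pow_mulVec_single_zero,
    krylov_mulVec_symm_iff]
end

section
/- Let K be a field, n, t ≥ 1, and A ∈ K^{nt×nt}. Suppose that the identity [B, AB, …, A^{n-1} B] G = [G, AG, …, A^{n-1} G] B holds for all blockwise commuting B, G ∈ K^{nt×t}. Then R(A, E_0) = I_{nt}, and consequently A = F_P for some P ∈ K^{nt×t}. -/
open Matrix

/-- The second block companion matrix `F_P` associated with the stacked blocks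
`P = [P_0; …; P_{n-1}] ∈ K^{nt×t}`: the `(i,j)` block (of size `t×t`) is `I_t` if
`i = j+1`, `P_i` if `j = n-1`, and `0` otherwise. -/
def bcompanion {K : Type*} [Field K] {n t : ℕ}
    (P : Matrix (Fin (n + 1) × Fin t) (Fin t) K) :
    Matrix (Fin (n + 1) × Fin t) (Fin (n + 1) × Fin t) K :=
  Matrix.of fun r s =>
    if s.1 = Fin.last n then P r s.2
    else if (r.1 : ℕ) = (s.1 : ℕ) + 1 ∧ r.2 = s.2 then 1 else 0

/-- The `n`-step reachability matrix `R(A, G) = [G, AG, …, A^{n-1} G] ∈ K^{nt×nm}`. -/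
def bkrylov {K : Type*} [Field K] {n t m : ℕ}
    (A : Matrix (Fin (n + 1) × Fin t) (Fin (n + 1) × Fin t) K)
    (G : Matrix (Fin (n + 1) × Fin t) (Fin m) K) :
    Matrix (Fin (n + 1) × Fin t) (Fin (n + 1) × Fin m) K :=
  Matrix.of fun r s => (A ^ (s.1 : ℕ) * G) r s.2

/-- `E_i = e_i ⊗ I_t ∈ K^{nt×t}`. -/
def Eblk {K : Type*} [Field K] {n t : ℕ} (i : Fin (n + 1)) :
    Matrix (Fin (n + 1) × Fin t) (Fin t) K :=
  Matrix.of fun r c => if r.1 = i ∧ r.2 = c then 1 else 0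

/-- `I_n ⊗ G_i ∈ K^{nt×nm}`, where `G_i` is the `i`-th block of
`G = [G_0; …; G_{n-1}] ∈ K^{nt×m}`. -/
def blockDiag {K : Type*} [Field K] {n t m : ℕ}
    (G : Matrix (Fin (n + 1) × Fin t) (Fin m) K) (i : Fin (n + 1)) :
    Matrix (Fin (n + 1) × Fin t) (Fin (n + 1) × Fin m) K :=
  Matrix.of fun r s => if r.1 = s.1 then G (i, r.2) s.2 else 0

/-- The operator substitution `G(A) = Σ_{i=0}^{n-1} A^i (I_n ⊗ G_i) ∈ K^{nt×nm}`. -/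
def bpolyEval {K : Type*} [Field K] {n t m : ℕ}
    (G : Matrix (Fin (n + 1) × Fin t) (Fin m) K)
    (A : Matrix (Fin (n + 1) × Fin t) (Fin (n + 1) × Fin t) K) :
    Matrix (Fin (n + 1) × Fin t) (Fin (n + 1) × Fin m) K :=
  ∑ i : Fin (n + 1), A ^ (i : ℕ) * blockDiag G i

/-- The `i`-th block `B_i ∈ K^{t×t}` of a stacked matrix `B = [B_0; …; B_{n-1}]`. -/
def blk {K : Type*} [Field K] {n t : ℕ} (B : Matrix (Fin (n + 1) × Fin t) (Fin t) K)
    (i : Fin (n + 1)) : Matrix (Fin t) (Fin t) K :=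
  Matrix.of fun a b => B (i, a) b

/-- `B` and `G` are blockwise commuting: `B_i G_j = G_j B_i` for all `i, j`. -/
def BlockwiseComm {K : Type*} [Field K] {n t : ℕ}
    (B G : Matrix (Fin (n + 1) × Fin t) (Fin t) K) : Prop :=
  ∀ i j : Fin (n + 1), blk B i * blk G j = blk G j * blk B i

/-! The block column `E_0` has blocks `I_t, 0, …, 0`, so it commutes blockwise with every `G`.
Taking `B = E_0` turns the hypothesis into `R(A, E_0) G = R(A, G) E_0 = G` for all `G`, hence
`R(A, E_0) = I`. Its block columns then say `A^j E_0 = E_j`, so `A E_j = E_{j+1}` for `j < n - 1`: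
all block columns of `A` but the last are those of a block companion matrix. -/

theorem Matrix.eq_one_of_forall_mul_eq_self {ι κ R : Type*} [Fintype ι] [DecidableEq ι]
    [Nonempty κ] [Semiring R] {M : Matrix ι ι R} (hM : ∀ G : Matrix ι κ R, M * G = G) :
    M = 1 := by
  refine ext_iff_mulVec.2 fun v => funext fun r => ?_
  obtain ⟨k⟩ := ‹Nonempty κ›
  simpa [← replicateCol_mulVec] using congrFun (congrFun (hM (replicateCol κ v)) r) k

section
variable {K : Type*} [Field K] {n t : ℕ}

theorem mul_Eblk_apply {α : Type*} [Fintype α] (X : Matrix α (Fin (n + 1) × Fin t) K)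
    (j : Fin (n + 1)) (r : α) (a : Fin t) :
    (X * (Eblk j : Matrix (Fin (n + 1) × Fin t) (Fin t) K)) r a = X r (j, a) := by
  simp only [mul_apply, Eblk, of_apply, Fintype.sum_prod_type]
  simp [ite_and]

theorem blk_Eblk_zero (i : Fin (n + 1)) :
    blk (Eblk 0 : Matrix (Fin (n + 1) × Fin t) (Fin t) K) i = if i = 0 then 1 else 0 := by
  ext a b
  by_cases hi : i = 0 <;> simp [blk, Eblk, hi, one_apply, eq_comm]

theorem blockwiseComm_Eblk_zero (G : Matrix (Fin (n + 1) × Fin t) (Fin t) K) :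
    BlockwiseComm (Eblk 0) G := by
  intro i j
  rw [blk_Eblk_zero]
  split_ifs <;> simp

theorem bkrylov_mul_Eblk_zero (A : Matrix (Fin (n + 1) × Fin t) (Fin (n + 1) × Fin t) K)
    (G : Matrix (Fin (n + 1) × Fin t) (Fin t) K) :
    bkrylov A G * (Eblk 0 : Matrix (Fin (n + 1) × Fin t) (Fin t) K) = G := by
  ext r a
  simp [mul_Eblk_apply, bkrylov]

theorem pow_mul_Eblk_zero_of_bkrylov_eq_one
    {A : Matrix (Fin (n + 1) × Fin t) (Fin (n + 1) × Fin t) K}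
    (hA : bkrylov A (Eblk 0) = 1) (j : Fin (n + 1)) :
    A ^ (j : ℕ) * (Eblk 0 : Matrix (Fin (n + 1) × Fin t) (Fin t) K) = Eblk j := by
  ext r a
  have := congrFun (congrFun hA r) (j, a)
  simp only [bkrylov, of_apply] at this
  rw [this, one_apply]
  simp [Eblk, Prod.ext_iff]

theorem eq_bcompanion_of_mul_Eblk {A : Matrix (Fin (n + 1) × Fin t) (Fin (n + 1) × Fin t) K}
    (hA : ∀ j : Fin n,
      A * (Eblk j.castSucc : Matrix (Fin (n + 1) × Fin t) (Fin t) K) = Eblk j.succ) :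
    A = bcompanion (A * (Eblk (Fin.last n) : Matrix (Fin (n + 1) × Fin t) (Fin t) K)) := by
  ext r ⟨j, a⟩
  rw [← mul_Eblk_apply A]
  simp only [bcompanion, of_apply]
  rcases Fin.eq_castSucc_or_eq_last j with ⟨j, rfl⟩ | rfl
  · rw [if_neg (Fin.castSucc_ne_last j), hA j]
    simp [Eblk, Fin.ext_iff]
  · rw [if_pos rfl]

end

/-- If `[B, AB, …, A^{n-1}B] G = [G, AG, …, A^{n-1}G] B` for all blockwise commuting
`B, G ∈ K^{nt×t}`, then `R(A, E_0) = I_{nt}`, and consequently `A = F_P` for some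
`P ∈ K^{nt×t}`. -/
theorem bcompanion_of_blockwise_symm {K : Type*} [Field K] {n t : ℕ} (ht : 0 < t)
    (A : Matrix (Fin (n + 1) × Fin t) (Fin (n + 1) × Fin t) K)
    (h : ∀ B G : Matrix (Fin (n + 1) × Fin t) (Fin t) K, BlockwiseComm B G →
      bkrylov A B * G = bkrylov A G * B) :
    bkrylov A (Eblk (0 : Fin (n + 1))) = 1 ∧
      ∃ P : Matrix (Fin (n + 1) × Fin t) (Fin t) K, A = bcompanion P := by
  have : Nonempty (Fin t) := ⟨⟨0, ht⟩⟩
  have hR : bkrylov A (Eblk 0) = 1 := eq_one_of_forall_mul_eq_self fun G => by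
    rw [h _ G (blockwiseComm_Eblk_zero G), bkrylov_mul_Eblk_zero]
  have hpow := pow_mul_Eblk_zero_of_bkrylov_eq_one hR
  refine ⟨hR, _, eq_bcompanion_of_mul_Eblk fun j => ?_⟩
  rw [← hpow j.castSucc, ← hpow j.succ, ← Matrix.mul_assoc, ← pow_succ']
  rfl
end
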